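/- Let Q be a real d×d matrix, λ ∈ ℝ^d, n ∈ ℕ, and x(0) ∈ ℝ^d, all regarded as complex. Let A be the (n+1)×(n+1) matrix with A_{ii} = −(n−i), A_{i+1,i} = n−i, other entries zero, and let 𝐐 = A ⊗ diag(λ) + I_{n+1} ⊗ Q. For u ∈ ℝ let e(u) = (1, e^{iu}, e^{2iu}, …, e^{niu}) ∈ ℂ^{n+1}. Then for every t ∈ ℝ and u ∈ ℝ, (e(u)ᵀ ⊗ I_d) · exp(t𝐐) · (e_0 ⊗ x(0)) = ∑_{k=0}^{n} C(n,k) · e^{iuk} · (1 − e^{iu})^{n−k} · exp(t(Q − (n−k)·diag(λ))) · x(0). -/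

import Mathlib

open Kronecker NormedSpace Matrix

/-! The bidiagonal matrix `A` is diagonalised by the lower unitriangular matrix
`S i k = (-1)^(i-k) C(n-k, i-k)`: `A S = S diag(-(n-k))`. Hence `𝐐 (S ⊗ I) = (S ⊗ I) 𝐃` with
`𝐃 = diag(-(n-k)) ⊗ diag λ + I ⊗ Q` block diagonal, so `exp(t𝐐) (S ⊗ I) = (S ⊗ I) exp(t𝐃)` and
`exp(t𝐃)` acts on the `k`-th block by `exp(t(Q - (n-k) diag λ))`. Two binomial expansions finish
the computation: `e₀ = S (C(n,k))ₖ` (alternating sum of binomial coefficients), and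
`e(u)ᵀ S = (z^k (1-z)^(n-k))ₖ` with `z = e^{iu}`, i.e. column `k` of `S` has generating polynomial
`X^k (1-X)^(n-k)`. -/

open Finset

section Death

variable (R : Type*) [CommRing R] (n : ℕ)

def deathGenerator : Matrix (Fin (n + 1)) (Fin (n + 1)) R :=
  of fun i j => if i = j then -((n - i : ℕ) : R) else if (i : ℕ) = j + 1 then ((n - j : ℕ) : R) else 0

def deathCoeff (i k : ℕ) : R :=
  if k ≤ i then (-1) ^ (i - k) * ((n - k).choose (i - k) : R) else 0

def deathEigenvectors : Matrix (Fin (n + 1)) (Fin (n + 1)) R :=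
  of fun i k => deathCoeff R n i k

variable {R n}

theorem sum_pow_mul_deathCoeff (z : R) {k : ℕ} (hk : k ≤ n) :
    ∑ i ∈ range (n + 1), z ^ i * deathCoeff R n i k = z ^ k * (1 - z) ^ (n - k) := by
  rw [show n + 1 = k + (n - k + 1) by omega, sum_range_add,
    sum_eq_zero fun i hi => by simp [deathCoeff, (mem_range.mp hi).not_ge], zero_add,
    sub_eq_neg_add, add_pow, mul_sum]
  refine sum_congr rfl fun i _ => ?_
  simp only [deathCoeff, le_add_iff_nonneg_right, zero_le, if_true, add_tsub_cancel_left,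
    one_pow, pow_add, neg_pow z]
  ring

theorem sum_deathCoeff_mul_choose {i : ℕ} (hi : i ≤ n) :
    ∑ k ∈ range (n + 1), deathCoeff R n i k * n.choose k = if i = 0 then 1 else 0 := by
  have hchoose {k : ℕ} (hk : k ≤ i) :
      ((n - k).choose (i - k) * n.choose k : R) = n.choose i * i.choose k := by
    exact_mod_cast by rw [mul_comm, ← Nat.choose_mul hk]
  rw [show n + 1 = (i + 1) + (n - i) by omega, sum_range_add,
    sum_eq_zero (s := range (n - i)) fun k _ => by rw [deathCoeff, if_neg (by omega), zero_mul],
    add_zero]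
  calc ∑ k ∈ range (i + 1), deathCoeff R n i k * n.choose k
      = n.choose i * ∑ k ∈ range (i + 1), 1 ^ k * (-1 : R) ^ (i - k) * i.choose k := by
        rw [mul_sum]
        refine sum_congr rfl fun k hk => ?_
        have hki : k ≤ i := Nat.lt_succ_iff.mp (mem_range.mp hk)
        rw [deathCoeff, if_pos hki, mul_assoc, hchoose hki]
        ring
    _ = if i = 0 then 1 else 0 := by
        rw [← add_pow, add_neg_cancel, zero_pow_eq]
        split_ifs with h <;> simp [h]

theorem neg_mul_deathCoeff_succ_add_mul_deathCoeff {i : ℕ} (k : ℕ) (hi : i + 1 ≤ n) :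
    -((n - (i + 1) : ℕ) : R) * deathCoeff R n (i + 1) k + ((n - i : ℕ) : R) * deathCoeff R n i k =
      deathCoeff R n (i + 1) k * -((n - k : ℕ) : R) := by
  rcases lt_trichotomy k (i + 1) with hk | rfl | hk
  · obtain ⟨m, rfl⟩ := Nat.exists_eq_add_of_le (Nat.lt_succ_iff.mp hk)
    obtain ⟨r, rfl⟩ := Nat.exists_eq_add_of_le hi
    have hchoose : ((m + 1 + r).choose (m + 1) : R) * (m + 1) = (m + 1 + r).choose m * (r + 1) := by
      simpa [show m + 1 + r - m = r + 1 by omega] using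
        congrArg (Nat.cast : ℕ → R) (Nat.choose_succ_right_eq (m + 1 + r) m)
    simp only [deathCoeff, if_pos (show k ≤ k + m + 1 by omega), if_pos (show k ≤ k + m by omega),
      show k + m + 1 - k = m + 1 by omega, show k + m - k = m by omega,
      show k + m + 1 + r - k = m + 1 + r by omega, show k + m + 1 + r - (k + m + 1) = r by omega,
      show k + m + 1 + r - (k + m) = r + 1 by omega, pow_succ]
    push_cast
    linear_combination -(-1 : R) ^ m * hchoose
  · simp [deathCoeff]
  · simp [deathCoeff, show ¬ k ≤ i + 1 by omega, show ¬ k ≤ i by omega]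

theorem deathGenerator_mul_deathEigenvectors :
    deathGenerator R n * deathEigenvectors R n =
      deathEigenvectors R n * diagonal fun k : Fin (n + 1) => -((n - k : ℕ) : R) := by
  ext i k
  rw [mul_diagonal, mul_apply]
  induction i using Fin.cases with
  | zero =>
    rw [Fintype.sum_eq_single 0 fun j hj => by
      rw [deathGenerator, of_apply, if_neg (Ne.symm hj), if_neg (by simp), zero_mul]]
    by_cases hk : k = 0 <;> simp [deathGenerator, deathEigenvectors, deathCoeff, hk, Fin.ext_iff]
  | succ i =>
    have hne : i.succ ≠ i.castSucc := i.castSucc_lt_succ.ne'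
    rw [Fintype.sum_eq_add i.succ i.castSucc hne fun j hj => by
      have hj' : (i.succ : ℕ) ≠ j + 1 := fun h => hj.2 (Fin.ext (by simp at h ⊢; omega))
      rw [deathGenerator, of_apply, if_neg (Ne.symm hj.1), if_neg hj', zero_mul]]
    simpa [deathGenerator, deathEigenvectors, hne] using
      neg_mul_deathCoeff_succ_add_mul_deathCoeff (R := R) k i.is_lt

theorem vecMul_deathEigenvectors (z : R) :
    (fun i : Fin (n + 1) => z ^ (i : ℕ)) ᵥ* deathEigenvectors R n =
      fun k : Fin (n + 1) => z ^ (k : ℕ) * (1 - z) ^ (n - k) := by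
  ext k
  rw [vecMul, dotProduct, ← sum_pow_mul_deathCoeff z (Nat.lt_succ_iff.mp k.is_lt),
    ← Fin.sum_univ_eq_sum_range]
  rfl

theorem deathEigenvectors_mulVec_choose :
    deathEigenvectors R n *ᵥ (fun k => (n.choose k : R)) = Pi.single 0 1 := by
  ext i
  calc (deathEigenvectors R n *ᵥ fun k => (n.choose k : R)) i
      = ∑ k ∈ range (n + 1), deathCoeff R n i k * n.choose k :=
        Fin.sum_univ_eq_sum_range (fun k => deathCoeff R n i k * n.choose k) _
    _ = (Pi.single 0 1 : Fin (n + 1) → R) i := by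
        rw [sum_deathCoeff_mul_choose (Nat.lt_succ_iff.mp i.is_lt), Pi.single_apply]
        simp only [Fin.ext_iff, Fin.val_zero]

end Death

section Kronecker

variable {ι m R : Type*} [Fintype ι] [Fintype m] [DecidableEq m]

theorem kronecker_one_mulVec_apply [Semiring R] (S : Matrix ι ι R) (y : ι × m → R) (i : ι)
    (a : m) : ((S ⊗ₖ (1 : Matrix m m R)) *ᵥ y) (i, a) = ∑ k, S i k * y (k, a) := by
  simp [mulVec, dotProduct, Fintype.sum_prod_type, one_apply]

theorem kronecker_one_mulVec_mul [Semiring R] (S : Matrix ι ι R) (w : ι → R) (x : m → R) :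
    (S ⊗ₖ (1 : Matrix m m R)) *ᵥ (fun p => w p.1 * x p.2) = fun p => (S *ᵥ w) p.1 * x p.2 := by
  ext ⟨i, a⟩
  rw [kronecker_one_mulVec_apply]
  simp only [mulVec, dotProduct, sum_mul, mul_assoc]

theorem sum_mul_kronecker_one_mulVec_apply [Semiring R] (r : ι → R) (S : Matrix ι ι R)
    (y : ι × m → R) (a : m) :
    ∑ j, r j * ((S ⊗ₖ (1 : Matrix m m R)) *ᵥ y) (j, a) = ∑ k, (r ᵥ* S) k * y (k, a) := by
  simp only [kronecker_one_mulVec_apply, vecMul, dotProduct, mul_sum, sum_mul, mul_assoc]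
  exact sum_comm

theorem kronecker_add_one_kronecker_mul_kronecker_one [DecidableEq ι] [CommSemiring R]
    {A S D : Matrix ι ι R} (h : A * S = S * D) (Λ Q : Matrix m m R) :
    (A ⊗ₖ Λ + 1 ⊗ₖ Q) * (S ⊗ₖ 1) = (S ⊗ₖ 1) * (D ⊗ₖ Λ + 1 ⊗ₖ Q) := by
  simp only [add_mul, mul_add, ← mul_kronecker_mul, h, one_mul, mul_one]

end Kronecker

theorem diagonal_kronecker_add_one_kronecker {ι m R : Type*} [DecidableEq ι] [Semiring R]
    (c : ι → R) (Λ Q : Matrix m m R) :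
    diagonal c ⊗ₖ Λ + 1 ⊗ₖ Q =
      reindex (.prodComm _ _) (.prodComm _ _) (blockDiagonal fun i => c i • Λ + Q) := by
  rw [← diagonal_one, diagonal_kronecker, diagonal_kronecker]
  ext ⟨i, a⟩ ⟨j, b⟩
  simp only [Matrix.add_apply, reindex_apply, submatrix_apply, Equiv.prodComm_symm,
    Equiv.prodComm_apply, Prod.swap_prod_mk, blockDiagonal_apply]
  split_ifs with h <;> simp [h]

section Exp

variable {m ι 𝕂 : Type*} [Fintype m] [DecidableEq m] [RCLike 𝕂]

theorem Matrix.exp_mul_eq_mul_exp_of_mul_eq_mul {M N P : Matrix m m 𝕂} (h : M * P = P * N) :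
    exp M * P = P * exp N :=
  open scoped Norms.Operator in (SemiconjBy.exp_right h.symm).symm

theorem Matrix.exp_reindex {n : Type*} [Fintype n] [DecidableEq n] (e : m ≃ n)
    (M : Matrix m m 𝕂) : exp (reindex e e M) = reindex e e (exp M) :=
  open scoped Norms.Operator in
  (map_exp (reindexAlgEquiv ℚ 𝕂 e) (continuous_id.matrix_reindex e e) M).symm

theorem exp_diagonal_kronecker_add_one_kronecker_mulVec [Fintype ι] [DecidableEq ι]
    (c : ι → 𝕂) (Λ Q : Matrix m m 𝕂) (w : ι → 𝕂) (x : m → 𝕂) :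
    exp (diagonal c ⊗ₖ Λ + 1 ⊗ₖ Q) *ᵥ (fun p => w p.1 * x p.2) =
      fun p => w p.1 * (exp (c p.1 • Λ + Q) *ᵥ x) p.2 := by
  have hblock (i : ι) : exp (fun k => c k • Λ + Q) i = exp (c i • Λ + Q) :=
    open scoped Norms.Operator in
    map_exp (Pi.evalRingHom (fun _ => Matrix m m 𝕂) i) (continuous_apply i) _
  ext ⟨i, a⟩
  rw [diagonal_kronecker_add_one_kronecker, exp_reindex, exp_blockDiagonal]
  simp [mulVec, dotProduct, Fintype.sum_prod_type, blockDiagonal_apply, mul_sum, hblock,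
    mul_left_comm]

end Exp

theorem stmt_7_general (d : ℕ) (n : ℕ)
    (x0 : Fin d → ℂ)
    (Qc : Matrix (Fin d) (Fin d) ℂ)
    (lc : Fin d → ℂ)
    (A : Matrix (Fin (n + 1)) (Fin (n + 1)) ℂ)
    (hA : ∀ i j : Fin (n + 1), A i j =
      if i = j then -((n - (i : ℕ) : ℕ) : ℂ)
      else if (i : ℕ) = (j : ℕ) + 1 then ((n - (j : ℕ) : ℕ) : ℂ) else 0)
    (bQ : Matrix (Fin (n + 1) × Fin d) (Fin (n + 1) × Fin d) ℂ)
    (hbQ : bQ = A ⊗ₖ Matrix.diagonal lc + (1 : Matrix (Fin (n + 1)) (Fin (n + 1)) ℂ) ⊗ₖ Qc)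
    (v0 : Fin (n + 1) × Fin d → ℂ)
    (hv0 : v0 = fun p => if p.1 = 0 then x0 p.2 else 0)
    (t u : ℝ) :
    (fun a : Fin d => ∑ j : Fin (n + 1),
        Complex.exp (Complex.I * u * (j : ℕ)) * (exp ((t : ℂ) • bQ) *ᵥ v0) (j, a)) =
      ∑ k ∈ Finset.range (n + 1),
        ((Nat.choose n k : ℂ) * Complex.exp (Complex.I * u * k) *
            (1 - Complex.exp (Complex.I * u)) ^ (n - k)) •
          (exp ((t : ℂ) • (Qc - ((n - k : ℕ) : ℂ) • Matrix.diagonal lc)) *ᵥ x0) := by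
  set S := deathEigenvectors ℂ n
  set c : Fin (n + 1) → ℂ := fun k => t * -((n - k : ℕ) : ℂ)
  have hv0' : v0 = (S ⊗ₖ 1) *ᵥ fun p => (n.choose p.1 : ℂ) * x0 p.2 := by
    rw [kronecker_one_mulVec_mul S (fun k => (n.choose k : ℂ)) x0,
      deathEigenvectors_mulVec_choose, hv0]
    ext ⟨i, a⟩
    by_cases hi : i = 0 <;> simp [hi]
  have hconj : (t : ℂ) • bQ * (S ⊗ₖ 1) =
      (S ⊗ₖ 1) * (diagonal c ⊗ₖ diagonal lc + 1 ⊗ₖ ((t : ℂ) • Qc)) := by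
    have hAS : (t : ℂ) • A * S = S * diagonal c := by
      rw [show A = deathGenerator ℂ n from Matrix.ext hA, smul_mul_assoc,
        deathGenerator_mul_deathEigenvectors, ← mul_smul_comm, ← diagonal_smul]
      rfl
    rw [hbQ, smul_add, ← smul_kronecker, ← kronecker_smul]
    exact kronecker_add_one_kronecker_mul_kronecker_one hAS _ _
  have hz (j : ℕ) : Complex.exp (Complex.I * u * j) = Complex.exp (Complex.I * u) ^ j := by
    rw [← Complex.exp_nat_mul]
    ring_nf
  ext a
  rw [hv0', mulVec_mulVec, exp_mul_eq_mul_exp_of_mul_eq_mul hconj, ← mulVec_mulVec,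
    exp_diagonal_kronecker_add_one_kronecker_mulVec c _ _ (fun k => (n.choose k : ℂ)) x0]
  simp only [hz]
  rw [sum_mul_kronecker_one_mulVec_apply, vecMul_deathEigenvectors, Finset.sum_apply,
    ← Fin.sum_univ_eq_sum_range]
  refine sum_congr rfl fun k _ => ?_
  have hblock : c k • diagonal lc + (t : ℂ) • Qc =
      (t : ℂ) • (Qc - ((n - k : ℕ) : ℂ) • diagonal lc) := by
    simp only [c]
    module
  simp only [hblock, Pi.smul_apply, smul_eq_mul]
  ring

/-- Characteristic-function identity `(e(u)ᵀ ⊗ I) exp(t𝐐) (e₀ ⊗ x(0)) = ∑ₖ C(n,k) e^{iuk}(1-e^{iu})^{n-k} exp(t Q_{(n-k)λ}) x(0)`. -/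
theorem stmt_7 (d : ℕ) (hd : 1 ≤ d) (n : ℕ)
    (Q : Matrix (Fin d) (Fin d) ℝ) (l : Fin d → ℝ) (x0 : Fin d → ℂ)
    (Qc : Matrix (Fin d) (Fin d) ℂ) (hQc : Qc = Q.map (Complex.ofReal))
    (lc : Fin d → ℂ) (hlc : lc = fun i => (l i : ℂ))
    (A : Matrix (Fin (n + 1)) (Fin (n + 1)) ℂ)
    (hA : ∀ i j : Fin (n + 1), A i j =
      if i = j then -((n - (i : ℕ) : ℕ) : ℂ)
      else if (i : ℕ) = (j : ℕ) + 1 then ((n - (j : ℕ) : ℕ) : ℂ) else 0)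
    (bQ : Matrix (Fin (n + 1) × Fin d) (Fin (n + 1) × Fin d) ℂ)
    (hbQ : bQ = A ⊗ₖ Matrix.diagonal lc + (1 : Matrix (Fin (n + 1)) (Fin (n + 1)) ℂ) ⊗ₖ Qc)
    (v0 : Fin (n + 1) × Fin d → ℂ)
    (hv0 : v0 = fun p => if p.1 = 0 then x0 p.2 else 0)
    (t u : ℝ) :
    (fun a : Fin d => ∑ j : Fin (n + 1),
        Complex.exp (Complex.I * u * (j : ℕ)) * (exp ((t : ℂ) • bQ) *ᵥ v0) (j, a)) =
      ∑ k ∈ Finset.range (n + 1),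
        ((Nat.choose n k : ℂ) * Complex.exp (Complex.I * u * k) *
            (1 - Complex.exp (Complex.I * u)) ^ (n - k)) •
          (exp ((t : ℂ) • (Qc - ((n - k : ℕ) : ℂ) • Matrix.diagonal lc)) *ᵥ x0) :=
  stmt_7_general d n x0 Qc lc A hA bQ hbQ v0 hv0 t u
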